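/- arXiv:1011.2769 — 4 statements merged into one kernel-verified Lean document; each statement's English description precedes it below -/
import Mathlib

section
/- Let U be a subgroup of the unit circle {z ∈ ℂ : |z| = 1} with −1 ∈ U and with at least 6 elements. Then R(U) is closed under addition: if p, q ∈ R(U), then p + q ∈ R(U). -/
/-- The antisymmetric bracket `⟨x,y⟩ = x·conj(y) − conj(x)·y`. -/
noncomputable def sbr (x y : ℂ) : ℂ :=
  x * (starRingEnd ℂ) y - (starRingEnd ℂ) x * y

/-- The intersection point `I_{u,v}(p,q)` of the lines `L_u(p)` and `L_v(q)`. -/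
noncomputable def Iop (u v p q : ℂ) : ℂ :=
  (sbr u p / sbr u v) * v + (sbr v q / sbr v u) * u

/-- `origamiPts U` is the smallest subset of `ℂ` containing `0` and `1` that is
closed under `(p,q) ↦ I_{u,v}(p,q)` for all `u, v ∈ U` with `u ≠ ±v`.  This is `R(U)`. -/
inductive origamiPts (U : Set ℂ) : ℂ → Prop
  | zero : origamiPts U 0
  | one : origamiPts U 1
  | inter {u v : ℂ} (hu : u ∈ U) (hv : v ∈ U) (huv : u ≠ v) (huv' : u ≠ -v)
      {p q : ℂ} (hp : origamiPts U p) (hq : origamiPts U q) :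
      origamiPts U (Iop u v p q)


/-!
Write `q = x + y` with `x ∈ ℝb` and `y ∈ ℝa` its components in a basis `a, b` of directions
from `U`; both are intersection points, hence in `R(U)`. A point `x ∈ R(U)` lying on a line `ℝv`
can be added to any `p ∈ R(U)` by three intersections, using two further directions `w, t ∈ U`
transverse to `v` and to each other; six elements of `U` leave room for them, since each chosen
direction rules out only itself and its negative.
-/

theorem sbr_self (x : ℂ) : sbr x x = 0 := by
  simp only [sbr]; ring

theorem sbr_swap (x y : ℂ) : sbr y x = -sbr x y := by
  simp only [sbr]; ring

theorem sbr_zero_right (x : ℂ) : sbr x 0 = 0 := by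
  simp [sbr]

theorem sbr_add_right (x y z : ℂ) : sbr x (y + z) = sbr x y + sbr x z := by
  simp only [sbr, map_add]; ring

theorem sbr_mul_right_of_conj_eq {c : ℂ} (hc : starRingEnd ℂ c = c) (x y : ℂ) :
    sbr x (c * y) = c * sbr x y := by
  simp only [sbr, map_mul, hc]; ring

theorem conj_sbr (x y : ℂ) : starRingEnd ℂ (sbr x y) = -sbr x y := by
  simp only [sbr, map_sub, map_mul, Complex.conj_conj]; ring

theorem conj_sbr_div_sbr (a b c d : ℂ) :
    starRingEnd ℂ (sbr a b / sbr c d) = sbr a b / sbr c d := by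
  rw [map_div₀, conj_sbr, conj_sbr, neg_div_neg_eq]

/-- Cramer's rule in the real plane `ℂ`. -/
theorem sbr_mul_sub_sbr_mul (a b p : ℂ) : sbr a p * b - sbr b p * a = sbr a b * p := by
  simp only [sbr]; ring

theorem Iop_self {u v : ℂ} (huv : sbr u v ≠ 0) (p : ℂ) : Iop u v p p = p := by
  rw [Iop, sbr_swap u v, div_neg, neg_mul, ← sub_eq_add_neg, div_mul_eq_mul_div,
    div_mul_eq_mul_div, ← sub_div, sbr_mul_sub_sbr_mul, mul_div_cancel_left₀ _ huv]

theorem Iop_add_Iop (u v p q : ℂ) : Iop u v p 0 + Iop u v 0 q = Iop u v p q := by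
  simp [Iop, sbr_zero_right]

theorem sbr_Iop_left {u v : ℂ} (huv : sbr u v ≠ 0) (p q : ℂ) :
    sbr u (Iop u v p q) = sbr u p := by
  rw [Iop, sbr_add_right, sbr_mul_right_of_conj_eq (conj_sbr_div_sbr ..),
    sbr_mul_right_of_conj_eq (conj_sbr_div_sbr ..), sbr_self, mul_zero, add_zero,
    div_mul_cancel₀ _ huv]

theorem sbr_Iop_right {u v : ℂ} (huv : sbr u v ≠ 0) (p q : ℂ) :
    sbr v (Iop u v p q) = sbr v q := by
  have hvu : sbr v u ≠ 0 := by rwa [sbr_swap, neg_ne_zero]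
  rw [Iop, sbr_add_right, sbr_mul_right_of_conj_eq (conj_sbr_div_sbr ..),
    sbr_mul_right_of_conj_eq (conj_sbr_div_sbr ..), sbr_self, mul_zero, zero_add,
    div_mul_cancel₀ _ hvu]

/-- `sbr u z = sbr u p` says `z ∈ L_u(p)`, so this is uniqueness of the intersection point. -/
theorem Iop_eq_of_sbr_eq {u v p q z : ℂ} (huv : sbr u v ≠ 0)
    (hp : sbr u z = sbr u p) (hq : sbr v z = sbr v q) : Iop u v p q = z := by
  rw [Iop, ← hp, ← hq]
  exact Iop_self huv z

/-- For `x ∈ ℝv`: with `y := L_w(p) ∩ ℝt` one has `y + x = L_v(y) ∩ L_t(x)` and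
`p + x = L_v(p) ∩ L_w(y + x)`. -/
theorem Iop_Iop_Iop_eq_add {v w t p x : ℂ} (hvw : sbr v w ≠ 0) (hvt : sbr v t ≠ 0)
    (hwt : sbr w t ≠ 0) (hx : sbr v x = 0) :
    Iop v w p (Iop v t (Iop w t p 0) x) = p + x := by
  set y := Iop w t p 0
  have hxy : Iop v t y x = y + x := by
    refine Iop_eq_of_sbr_eq hvt ?_ ?_
    · rw [sbr_add_right, hx, add_zero]
    · rw [sbr_add_right, sbr_Iop_right hwt, sbr_zero_right, zero_add]
  rw [hxy]
  refine Iop_eq_of_sbr_eq hvw ?_ ?_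
  · rw [sbr_add_right, hx, add_zero]
  · rw [sbr_add_right, sbr_add_right, sbr_Iop_left hwt, add_comm]

section NePm

variable {α : Type*}

def NePm [Neg α] (x y : α) : Prop := x ≠ y ∧ x ≠ -y

theorem NePm.symm [InvolutiveNeg α] {x y : α} (h : NePm x y) : NePm y x :=
  ⟨h.1.symm, fun e => h.2 (by rw [e, neg_neg])⟩

theorem exists_nePm_pair [DecidableEq α] [InvolutiveNeg α] {s : Finset α}
    (hs : 6 ≤ s.card) (v : α) : ∃ w ∈ s, ∃ t ∈ s, NePm v w ∧ NePm v t ∧ NePm w t := by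
  have card_pm (x : α) : ({x, -x} : Finset α).card ≤ 2 := Finset.card_le_two
  have hs4 : 4 ≤ (s \ {v, -v}).card := by
    have := Finset.le_card_sdiff {v, -v} s
    have := card_pm v
    omega
  obtain ⟨w, hw⟩ : (s \ {v, -v}).Nonempty := Finset.card_pos.mp (by omega)
  obtain ⟨t, ht⟩ : ((s \ {v, -v}) \ {w, -w}).Nonempty := by
    rw [← Finset.card_pos]
    have := Finset.le_card_sdiff {w, -w} (s \ {v, -v})
    have := card_pm w
    omega
  simp only [Finset.mem_sdiff, Finset.mem_insert, Finset.mem_singleton, not_or] at hw ht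
  exact ⟨w, hw.1, t, ht.1.1, NePm.symm ⟨hw.2.1, hw.2.2⟩, NePm.symm ⟨ht.1.2.1, ht.1.2.2⟩,
    NePm.symm ⟨ht.2.1, ht.2.2⟩⟩

end NePm

theorem sbr_ne_zero {u v : ℂ} (hu : ‖u‖ = 1) (hv : ‖v‖ = 1) (h : NePm u v) : sbr u v ≠ 0 := by
  have hu0 : u ≠ 0 := norm_ne_zero_iff.mp (by rw [hu]; exact one_ne_zero)
  have hv0 : v ≠ 0 := norm_ne_zero_iff.mp (by rw [hv]; exact one_ne_zero)
  have hsq : (u - v) * (u + v) ≠ 0 := mul_ne_zero (sub_ne_zero.mpr h.1)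
    (fun e => h.2 (eq_neg_of_add_eq_zero_left e))
  rw [sbr, ← Complex.inv_eq_conj hu, ← Complex.inv_eq_conj hv]
  intro e
  field_simp at e
  exact hsq (by linear_combination e)

namespace origamiPts

variable {U : Set ℂ}

theorem Iop_mem {u v p q : ℂ} (hu : u ∈ U) (hv : v ∈ U) (huv : NePm u v)
    (hp : origamiPts U p) (hq : origamiPts U q) : origamiPts U (Iop u v p q) :=
  inter hu hv huv.1 huv.2 hp hq

theorem add_of_sbr_eq_zero (hsub : ∀ z ∈ U, ‖z‖ = 1) {s : Finset ℂ} (hsU : ↑s ⊆ U)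
    (hs : 6 ≤ s.card) {v p x : ℂ} (hv : v ∈ U) (hxv : sbr v x = 0)
    (hp : origamiPts U p) (hx : origamiPts U x) : origamiPts U (p + x) := by
  obtain ⟨w, hws, t, hts, hvw, hvt, hwt⟩ := exists_nePm_pair hs v
  have hw := hsU hws
  have ht := hsU hts
  rw [← Iop_Iop_Iop_eq_add (sbr_ne_zero (hsub v hv) (hsub w hw) hvw)
    (sbr_ne_zero (hsub v hv) (hsub t ht) hvt) (sbr_ne_zero (hsub w hw) (hsub t ht) hwt) hxv]
  exact Iop_mem hv hw hvw hp (Iop_mem hv ht hvt (Iop_mem hw ht hwt hp zero) hx)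

end origamiPts

theorem stmt_6_general (U : Set ℂ)
    (hsub : ∀ z ∈ U, ‖z‖ = 1)
    (hcard : ∃ s : Finset ℂ, ↑s ⊆ U ∧ 6 ≤ s.card)
    {p q : ℂ} (hp : origamiPts U p) (hq : origamiPts U q) :
    origamiPts U (p + q) := by
  obtain ⟨s, hsU, hs⟩ := hcard
  obtain ⟨a, has⟩ : s.Nonempty := Finset.card_pos.mp (by omega)
  obtain ⟨b, hbs, -, -, hab, -, -⟩ := exists_nePm_pair hs a
  have ha := hsU has
  have hb := hsU hbs
  have hab_sbr := sbr_ne_zero (hsub a ha) (hsub b hb) hab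
  have hpx : origamiPts U (p + Iop a b q 0) :=
    hp.add_of_sbr_eq_zero hsub hsU hs hb (by rw [sbr_Iop_right hab_sbr, sbr_zero_right])
      (.Iop_mem ha hb hab hq .zero)
  have hpxy := hpx.add_of_sbr_eq_zero hsub hsU hs ha
    (by rw [sbr_Iop_left hab_sbr, sbr_zero_right]) (.Iop_mem ha hb hab .zero hq)
  rwa [add_assoc, Iop_add_Iop, Iop_self hab_sbr] at hpxy

/-- `R(U)` is closed under addition, for `U` a subgroup of the unit circle
with `-1 ∈ U` and at least 6 elements. -/
theorem stmt_6 (U : Set ℂ)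
    (hsub : ∀ z ∈ U, ‖z‖ = 1)
    (hone : (1 : ℂ) ∈ U)
    (hmul : ∀ a ∈ U, ∀ b ∈ U, a * b ∈ U)
    (hinv : ∀ a ∈ U, a⁻¹ ∈ U)
    (hneg : (-1 : ℂ) ∈ U)
    (hcard : ∃ s : Finset ℂ, ↑s ⊆ U ∧ 6 ≤ s.card)
    {p q : ℂ} (hp : origamiPts U p) (hq : origamiPts U q) :
    origamiPts U (p + q) :=
  stmt_6_general U hsub hcard hp hq
end

section
/- Let U be a subgroup of the unit circle {z ∈ ℂ : |z| = 1} with −1 ∈ U and with at least 6 elements, and let V = {u² : u ∈ U}. Then R(U) equals the set of all finite integer linear combinations of finite products of complex numbers of the form (1 − a)/(1 − b), where a, b ∈ V and b ≠ 1. -/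
/-!
Write `a = u²`, `b = v²`. For unit `u, v` with `a ≠ b`, `I_{u,v}(p, q) = π a b p + π b a q`,
where `π a b x = (a b x̄ - b x) / (a - b)` is the ℝ-linear projection onto `ℝ v` along `ℝ u`.
Every product `m` of generators `(1 - a) / (1 - b)` satisfies `m̄ = m w` for some `w ∈ V`, and
then `π a b m` is `m` times another generator; so the ring they generate is stable under the
construction and contains `R(U)`. Conversely, the same formula makes multiplication of such an `m`
by a generator a single step `I_{u,v}(m, 0)`; three directions with distinct squares produce
`p + q` from `p` and `q`, and `-1 = (-x)(-x)(-x⁻²)` is a product of generators for any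
`x ∈ V \ {1, -1}`, so `R(U)` contains the ring.
-/

open ComplexConjugate

structure IsCircleSubgroup (U : Set ℂ) : Prop where
  norm_eq_one : ∀ z ∈ U, ‖z‖ = 1
  one_mem : (1 : ℂ) ∈ U
  mul_mem : ∀ a ∈ U, ∀ b ∈ U, a * b ∈ U
  inv_mem : ∀ a ∈ U, a⁻¹ ∈ U

namespace IsCircleSubgroup

variable {U : Set ℂ}

lemma ne_zero (hU : IsCircleSubgroup U) {z : ℂ} (hz : z ∈ U) : z ≠ 0 :=
  norm_ne_zero_iff.mp (by simp [hU.norm_eq_one z hz])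

lemma sq_image (hU : IsCircleSubgroup U) : IsCircleSubgroup ((· ^ 2) '' U) where
  norm_eq_one := by
    rintro _ ⟨u, hu, rfl⟩
    simp [hU.norm_eq_one u hu]
  one_mem := ⟨1, hU.one_mem, one_pow 2⟩
  mul_mem := by
    rintro _ ⟨u, hu, rfl⟩ _ ⟨v, hv, rfl⟩
    exact ⟨u * v, hU.mul_mem u hu v hv, mul_pow u v 2⟩
  inv_mem := by
    rintro _ ⟨u, hu, rfl⟩
    exact ⟨u⁻¹, hU.inv_mem u hu, inv_pow u 2⟩

end IsCircleSubgroup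

theorem Finset.card_le_two_mul_card_image_sq {R : Type*} [CommRing R] [IsDomain R]
    [DecidableEq R] (s : Finset R) : s.card ≤ 2 * (s.image (· ^ 2)).card := by
  refine Finset.card_le_mul_card_image s 2 fun b _ => ?_
  calc (s.filter (· ^ 2 = b)).card
      ≤ (Polynomial.nthRootsFinset 2 b).card := Finset.card_le_card fun x hx =>
        (Polynomial.mem_nthRootsFinset two_pos b).2 (Finset.mem_filter.1 hx).2
    _ ≤ 2 := by
      rw [Polynomial.nthRootsFinset_def]
      exact (Multiset.toFinset_card_le _).trans (Polynomial.card_nthRoots 2 b)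

/-- For unit `a ≠ b` with square roots `u, v`, the point of `ℝ v` on the line through `x`
parallel to `u`. -/
noncomputable def obliqueProj (a b : ℂ) : ℂ →+ ℂ where
  toFun x := (a * b * conj x - b * x) / (a - b)
  map_zero' := by simp
  map_add' x y := by simp only [map_add]; ring

lemma obliqueProj_apply (a b x : ℂ) : obliqueProj a b x = (a * b * conj x - b * x) / (a - b) := rfl

lemma obliqueProj_add_obliqueProj_swap {a b : ℂ} (hab : a ≠ b) (x : ℂ) :
    obliqueProj a b x + obliqueProj b a x = x := by
  have : a - b ≠ 0 := sub_ne_zero.2 hab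
  have : b - a ≠ 0 := sub_ne_zero.2 hab.symm
  simp only [obliqueProj_apply]
  field_simp
  ring

lemma obliqueProj_of_conj_eq_mul {a b z w : ℂ} (h : conj z = z * w) :
    obliqueProj a b z = z * (b * (a * w - 1) / (a - b)) := by
  rw [obliqueProj_apply, h]
  ring

lemma conj_obliqueProj {a b : ℂ} (ha : ‖a‖ = 1) (hb : ‖b‖ = 1) (hab : a ≠ b) (x : ℂ) :
    conj (obliqueProj a b x) = obliqueProj a b x * b⁻¹ := by
  have ha0 : a ≠ 0 := norm_ne_zero_iff.mp (by simp [ha])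
  have hb0 : b ≠ 0 := norm_ne_zero_iff.mp (by simp [hb])
  have h1 : a - b ≠ 0 := sub_ne_zero.2 hab
  have h2 : a⁻¹ - b⁻¹ ≠ 0 := sub_ne_zero.2 (inv_injective.ne hab)
  simp only [obliqueProj_apply, map_div₀, map_sub, map_mul, Complex.conj_conj,
    ← Complex.inv_eq_conj ha, ← Complex.inv_eq_conj hb]
  field_simp
  ring

lemma obliqueProj_obliqueProj_of_right {a b c : ℂ} (ha : ‖a‖ = 1) (hb : ‖b‖ = 1) (hab : a ≠ b)
    (hcb : c ≠ b) (x : ℂ) : obliqueProj c b (obliqueProj a b x) = obliqueProj a b x := by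
  have hb0 : b ≠ 0 := norm_ne_zero_iff.mp (by simp [hb])
  have : c - b ≠ 0 := sub_ne_zero.2 hcb
  rw [obliqueProj_of_conj_eq_mul (conj_obliqueProj ha hb hab x)]
  field_simp

lemma obliqueProj_obliqueProj_swap_eq_zero {a b c : ℂ} (ha : ‖a‖ = 1) (hc : ‖c‖ = 1)
    (hca : c ≠ a) (x : ℂ) : obliqueProj a b (obliqueProj c a x) = 0 := by
  have ha0 : a ≠ 0 := norm_ne_zero_iff.mp (by simp [ha])
  rw [obliqueProj_of_conj_eq_mul (conj_obliqueProj hc ha hca x), mul_inv_cancel₀ ha0]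
  ring

lemma obliqueProj_obliqueProj_of_left {a b c : ℂ} (ha : ‖a‖ = 1) (hc : ‖c‖ = 1)
    (hac : a ≠ c) (x : ℂ) :
    obliqueProj a b (obliqueProj a c x) = obliqueProj a b x := by
  rw [← sub_eq_of_eq_add' (obliqueProj_add_obliqueProj_swap hac.symm x).symm, map_sub,
    obliqueProj_obliqueProj_swap_eq_zero ha hc hac.symm, sub_zero]

lemma Iop_eq_obliqueProj {u v : ℂ} (hu : ‖u‖ = 1) (hv : ‖v‖ = 1) (huv : u ^ 2 ≠ v ^ 2) (p q : ℂ) :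
    Iop u v p q = obliqueProj (u ^ 2) (v ^ 2) p + obliqueProj (v ^ 2) (u ^ 2) q := by
  have hu0 : u ≠ 0 := norm_ne_zero_iff.mp (by simp [hu])
  have hv0 : v ≠ 0 := norm_ne_zero_iff.mp (by simp [hv])
  have : u ^ 2 - v ^ 2 ≠ 0 := sub_ne_zero.2 huv
  have : v ^ 2 - u ^ 2 ≠ 0 := sub_ne_zero.2 huv.symm
  rw [Iop, sbr, sbr, sbr, sbr, obliqueProj_apply, obliqueProj_apply,
    ← Complex.inv_eq_conj hu, ← Complex.inv_eq_conj hv]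
  field_simp

def chordRatios (V : Set ℂ) : Set ℂ :=
  {z : ℂ | ∃ a ∈ V, ∃ b ∈ V, b ≠ 1 ∧ z = (1 - a) / (1 - b)}

lemma conj_chordRatio {a b : ℂ} (ha : ‖a‖ = 1) (hb : ‖b‖ = 1) (hb1 : b ≠ 1) :
    conj ((1 - a) / (1 - b)) = (1 - a) / (1 - b) * (b * a⁻¹) := by
  have ha0 : a ≠ 0 := norm_ne_zero_iff.mp (by simp [ha])
  have hb0 : b ≠ 0 := norm_ne_zero_iff.mp (by simp [hb])
  have : 1 - b ≠ 0 := sub_ne_zero.2 hb1.symm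
  have : 1 - b⁻¹ ≠ 0 := sub_ne_zero.2 (inv_ne_one.2 hb1).symm
  simp only [map_div₀, map_sub, map_one, ← Complex.inv_eq_conj ha, ← Complex.inv_eq_conj hb]
  field_simp
  ring

namespace IsCircleSubgroup

variable {V : Set ℂ}

lemma exists_conj_eq_mul (hV : IsCircleSubgroup V) {m : ℂ}
    (hm : m ∈ Submonoid.closure (chordRatios V)) : ∃ w ∈ V, conj m = m * w := by
  induction hm using Submonoid.closure_induction with
  | mem z hz =>
    obtain ⟨a, ha, b, hb, hb1, rfl⟩ := hz
    exact ⟨b * a⁻¹, hV.mul_mem b hb _ (hV.inv_mem a ha),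
      conj_chordRatio (hV.norm_eq_one a ha) (hV.norm_eq_one b hb) hb1⟩
  | one => exact ⟨1, hV.one_mem, by simp⟩
  | mul x y _ _ hx hy =>
    obtain ⟨w, hw, hxw⟩ := hx
    obtain ⟨w', hw', hyw'⟩ := hy
    exact ⟨w * w', hV.mul_mem w hw w' hw', by rw [map_mul, hxw, hyw']; ring⟩

lemma obliqueProj_mem_closure (hV : IsCircleSubgroup V) {a b : ℂ} (ha : a ∈ V) (hb : b ∈ V)
    (hab : a ≠ b) {x : ℂ} (hx : x ∈ Subring.closure (chordRatios V)) :
    obliqueProj a b x ∈ Subring.closure (chordRatios V) := by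
  rw [Subring.mem_closure_iff] at hx
  refine (AddSubgroup.closure_le
    (K := (Subring.closure (chordRatios V)).toAddSubgroup.comap (obliqueProj a b))).2 ?_ hx
  intro m hm
  obtain ⟨w, hw, hmw⟩ := hV.exists_conj_eq_mul hm
  have hb0 := hV.ne_zero hb
  have hab' : a * b⁻¹ ≠ 1 := fun h => hab ((mul_inv_eq_one₀ hb0).1 h)
  have : a - b ≠ 0 := sub_ne_zero.2 hab
  have : 1 - a * b⁻¹ ≠ 0 := sub_ne_zero.2 hab'.symm
  have hgen : (1 - a * w) / (1 - a * b⁻¹) ∈ chordRatios V :=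
    ⟨a * w, hV.mul_mem a ha w hw, a * b⁻¹, hV.mul_mem a ha _ (hV.inv_mem b hb), hab', rfl⟩
  have hproj : obliqueProj a b m = m * ((1 - a * w) / (1 - a * b⁻¹)) := by
    rw [obliqueProj_of_conj_eq_mul hmw]
    field_simp
    ring
  show obliqueProj a b m ∈ Subring.closure (chordRatios V)
  rw [hproj]
  exact Subring.mul_mem _ (Subring.mem_closure_iff.2 (AddSubgroup.subset_closure hm))
    (Subring.subset_closure hgen)

lemma neg_mem_chordRatios (hV : IsCircleSubgroup V) {x : ℂ} (hx : x ∈ V) (hx1 : x ≠ 1) :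
    -x ∈ chordRatios V := by
  have hx0 := hV.ne_zero hx
  have : 1 - x⁻¹ ≠ 0 := sub_ne_zero.2 (inv_ne_one.2 hx1).symm
  refine ⟨x, hx, x⁻¹, hV.inv_mem x hx, inv_ne_one.2 hx1, ?_⟩
  field_simp
  ring

lemma neg_one_mem_closure (hV : IsCircleSubgroup V) {x : ℂ} (hx : x ∈ V) (hx1 : x ≠ 1)
    (hx1' : x ≠ -1) : (-1 : ℂ) ∈ Submonoid.closure (chordRatios V) := by
  have hx0 := hV.ne_zero hx
  have hxx : x * x ∈ V := hV.mul_mem x hx x hx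
  have hxx1 : (x * x)⁻¹ ≠ 1 := inv_ne_one.2 (mul_self_eq_one_iff.not.2 (not_or.2 ⟨hx1, hx1'⟩))
  have hneg : (-1 : ℂ) = -x * (-x * -(x * x)⁻¹) := by
    field_simp
  rw [hneg]
  exact Submonoid.mul_mem _ (Submonoid.subset_closure (hV.neg_mem_chordRatios hx hx1))
    (Submonoid.mul_mem _ (Submonoid.subset_closure (hV.neg_mem_chordRatios hx hx1))
      (Submonoid.subset_closure (hV.neg_mem_chordRatios (hV.inv_mem _ hxx) hxx1)))

end IsCircleSubgroup

namespace origamiPts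

variable {U : Set ℂ}

lemma obliqueProj_add_obliqueProj (hnorm : ∀ z ∈ U, ‖z‖ = 1) {u v p q : ℂ} (hu : u ∈ U)
    (hv : v ∈ U) (huv : u ^ 2 ≠ v ^ 2) (hp : origamiPts U p) (hq : origamiPts U q) :
    origamiPts U (obliqueProj (u ^ 2) (v ^ 2) p + obliqueProj (v ^ 2) (u ^ 2) q) := by
  rw [← Iop_eq_obliqueProj (hnorm u hu) (hnorm v hv) huv]
  obtain ⟨h, h'⟩ := not_or.1 (sq_eq_sq_iff_eq_or_eq_neg.not.1 huv)
  exact .inter hu hv h h' hp hq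

lemma map_obliqueProj (hnorm : ∀ z ∈ U, ‖z‖ = 1) {u v p : ℂ} (hu : u ∈ U) (hv : v ∈ U)
    (huv : u ^ 2 ≠ v ^ 2) (hp : origamiPts U p) : origamiPts U (obliqueProj (u ^ 2) (v ^ 2) p) := by
  simpa using hp.obliqueProj_add_obliqueProj hnorm hu hv huv .zero

lemma add (hnorm : ∀ z ∈ U, ‖z‖ = 1) {u v w p q : ℂ} (hu : u ∈ U) (hv : v ∈ U) (hw : w ∈ U)
    (huv : u ^ 2 ≠ v ^ 2) (huw : u ^ 2 ≠ w ^ 2) (hvw : v ^ 2 ≠ w ^ 2)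
    (hp : origamiPts U p) (hq : origamiPts U q) : origamiPts U (p + q) := by
  have ha : ‖u ^ 2‖ = 1 := by rw [norm_pow, hnorm u hu, one_pow]
  have hb : ‖v ^ 2‖ = 1 := by rw [norm_pow, hnorm v hv, one_pow]
  have hc : ‖w ^ 2‖ = 1 := by rw [norm_pow, hnorm w hw, one_pow]
  -- The two auxiliary points have the same projections onto `ℝ v`, resp. `ℝ u`, as `p + q`.
  have hX : origamiPts U (obliqueProj (u ^ 2) (v ^ 2) p + obliqueProj (u ^ 2) (w ^ 2) q) := by
    have := (hp.map_obliqueProj hnorm hu hv huv).obliqueProj_add_obliqueProj hnorm hw hv hvw.symm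
      (hq.map_obliqueProj hnorm hu hw huw)
    rwa [obliqueProj_obliqueProj_of_right ha hb huv hvw.symm,
      obliqueProj_obliqueProj_of_right ha hc huw hvw] at this
  have hY : origamiPts U (obliqueProj (v ^ 2) (u ^ 2) p + obliqueProj (v ^ 2) (w ^ 2) q) := by
    have := (hp.map_obliqueProj hnorm hv hu huv.symm).obliqueProj_add_obliqueProj hnorm hw hu
      huw.symm (hq.map_obliqueProj hnorm hv hw hvw)
    rwa [obliqueProj_obliqueProj_of_right hb ha huv.symm huw.symm,
      obliqueProj_obliqueProj_of_right hb hc hvw huw] at this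
  have := hX.obliqueProj_add_obliqueProj hnorm hu hv huv hY
  rwa [map_add, map_add, obliqueProj_obliqueProj_of_right ha hb huv huv,
    obliqueProj_obliqueProj_of_left ha hc huw, obliqueProj_obliqueProj_of_right hb ha huv.symm
    huv.symm, obliqueProj_obliqueProj_of_left hb hc hvw, add_add_add_comm,
    obliqueProj_add_obliqueProj_swap huv, obliqueProj_add_obliqueProj_swap huv] at this

lemma chordRatio_mul (hU : IsCircleSubgroup U) {m w g : ℂ} (hm : origamiPts U m)
    (hw : w ∈ (· ^ 2) '' U) (hmw : conj m = m * w) (hg : g ∈ chordRatios ((· ^ 2) '' U)) :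
    origamiPts U (g * m) := by
  obtain ⟨A, hA, B, hB, hB1, rfl⟩ := hg
  have hV := hU.sq_image
  have hw0 := hV.ne_zero hw
  have hA0 := hV.ne_zero hA
  have hB0 := hV.ne_zero hB
  obtain ⟨u, hu, hua : u ^ 2 = A * w⁻¹⟩ := hV.mul_mem A hA _ (hV.inv_mem w hw)
  obtain ⟨v, hv, hvb : v ^ 2 = A * w⁻¹ * B⁻¹⟩ :=
    hV.mul_mem _ (hV.mul_mem A hA _ (hV.inv_mem w hw)) _ (hV.inv_mem B hB)
  have huv : u ^ 2 ≠ v ^ 2 := by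
    rw [hua, hvb, Ne, eq_comm, mul_eq_left₀ (by simp [hA0, hw0]), inv_eq_one]
    exact hB1
  have : A * w⁻¹ - A * w⁻¹ * B⁻¹ ≠ 0 := by rwa [← hvb, ← hua, sub_ne_zero]
  have : 1 - B ≠ 0 := sub_ne_zero.2 hB1.symm
  have hproj : obliqueProj (u ^ 2) (v ^ 2) m = (1 - A) / (1 - B) * m := by
    rw [obliqueProj_of_conj_eq_mul hmw, hua, hvb]
    field_simp
    ring
  exact hproj ▸ hm.map_obliqueProj hU.norm_eq_one hu hv huv

end origamiPts

section

variable {U : Set ℂ}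

lemma origamiPts.mem_closure (hU : IsCircleSubgroup U) {z : ℂ} (hz : origamiPts U z) :
    z ∈ Subring.closure (chordRatios ((· ^ 2) '' U)) := by
  induction hz with
  | zero => exact zero_mem _
  | one => exact one_mem _
  | @inter u v hu hv huv huv' p q _ _ hp hq =>
    have hsq : u ^ 2 ≠ v ^ 2 := sq_eq_sq_iff_eq_or_eq_neg.not.2 (not_or.2 ⟨huv, huv'⟩)
    rw [Iop_eq_obliqueProj (hU.norm_eq_one u hu) (hU.norm_eq_one v hv) hsq]
    exact add_mem (hU.sq_image.obliqueProj_mem_closure ⟨u, hu, rfl⟩ ⟨v, hv, rfl⟩ hsq hp)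
      (hU.sq_image.obliqueProj_mem_closure ⟨v, hv, rfl⟩ ⟨u, hu, rfl⟩ hsq.symm hq)

lemma origamiPts_of_mem_submonoidClosure (hU : IsCircleSubgroup U) {m : ℂ}
    (hm : m ∈ Submonoid.closure (chordRatios ((· ^ 2) '' U))) : origamiPts U m := by
  induction hm using Submonoid.closure_induction_left with
  | one => exact .one
  | mul_left g hg m hm ih =>
    obtain ⟨w, hw, hmw⟩ := hU.sq_image.exists_conj_eq_mul hm
    exact ih.chordRatio_mul hU hw hmw hg

lemma origamiPts_of_mem_closure (hU : IsCircleSubgroup U) {t : Finset ℂ}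
    (htV : ↑t ⊆ (· ^ 2) '' U) (ht : 2 < t.card) {z : ℂ}
    (hz : z ∈ Subring.closure (chordRatios ((· ^ 2) '' U))) : origamiPts U z := by
  obtain ⟨x, hxt, hx⟩ := Finset.exists_mem_notMem_of_card_lt_card (s := {1, -1})
    ((Finset.card_le_two).trans_lt ht)
  obtain ⟨hx1, hx1'⟩ : x ≠ 1 ∧ x ≠ -1 := by simpa using hx
  have hneg := hU.sq_image.neg_one_mem_closure (htV hxt) hx1 hx1'
  obtain ⟨_, _, _, ha, hb, hc, hab, hac, hbc⟩ := Finset.two_lt_card_iff.1 ht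
  obtain ⟨u, hu, rfl⟩ := htV ha
  obtain ⟨v, hv, rfl⟩ := htV hb
  obtain ⟨w, hw, rfl⟩ := htV hc
  have hadd : ∀ {p q : ℂ}, origamiPts U p → origamiPts U q → origamiPts U (p + q) :=
    origamiPts.add hU.norm_eq_one hu hv hw hab hac hbc
  rw [Subring.mem_closure_iff] at hz
  suffices origamiPts U z ∧ origamiPts U (-z) from this.1
  induction hz using AddSubgroup.closure_induction with
  | mem m hm =>
    refine ⟨origamiPts_of_mem_submonoidClosure hU hm, origamiPts_of_mem_submonoidClosure hU ?_⟩
    simpa using Submonoid.mul_mem _ hneg hm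
  | zero => exact ⟨.zero, by rw [neg_zero]; exact .zero⟩
  | add p q _ _ hp hq => exact ⟨hadd hp.1 hq.1, (neg_add p q).symm ▸ hadd hp.2 hq.2⟩
  | neg p _ hp => exact ⟨hp.2, (neg_neg p).symm ▸ hp.1⟩

end

theorem stmt_12_general (U : Set ℂ)
    (hsub : ∀ z ∈ U, ‖z‖ = 1)
    (hone : (1 : ℂ) ∈ U)
    (hmul : ∀ a ∈ U, ∀ b ∈ U, a * b ∈ U)
    (hinv : ∀ a ∈ U, a⁻¹ ∈ U)
    (hcard : ∃ s : Finset ℂ, ↑s ⊆ U ∧ 6 ≤ s.card)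
    : {z : ℂ | origamiPts U z} =
      (AddSubgroup.closure
        ((Submonoid.closure
          {z : ℂ | ∃ a ∈ (fun u : ℂ => u ^ 2) '' U, ∃ b ∈ (fun u : ℂ => u ^ 2) '' U,
            b ≠ 1 ∧ z = (1 - a) / (1 - b)} : Submonoid ℂ) : Set ℂ) : AddSubgroup ℂ) := by
  have hU : IsCircleSubgroup U := ⟨hsub, hone, hmul, hinv⟩
  obtain ⟨s, hsU, hs⟩ := hcard
  have htV : ↑(s.image (· ^ 2)) ⊆ (· ^ 2) '' U := by
    rw [Finset.coe_image]
    exact Set.image_mono hsU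
  have ht : 2 < (s.image (· ^ 2)).card := by
    have := s.card_le_two_mul_card_image_sq
    omega
  ext z
  exact ⟨fun hz => Subring.mem_closure_iff.1 (hz.mem_closure hU),
    fun hz => origamiPts_of_mem_closure hU htV ht (Subring.mem_closure_iff.2 hz)⟩

/-- `R(U)` equals the set of finite integer linear combinations of finite products of
numbers of the form `(1 − a)/(1 − b)` with `a, b ∈ V = {u² : u ∈ U}`, `b ≠ 1`. -/
theorem stmt_12 (U : Set ℂ)
    (hsub : ∀ z ∈ U, ‖z‖ = 1)
    (hone : (1 : ℂ) ∈ U)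
    (hmul : ∀ a ∈ U, ∀ b ∈ U, a * b ∈ U)
    (hinv : ∀ a ∈ U, a⁻¹ ∈ U)
    (hneg : (-1 : ℂ) ∈ U)
    (hcard : ∃ s : Finset ℂ, ↑s ⊆ U ∧ 6 ≤ s.card)
    : {z : ℂ | origamiPts U z} =
      (AddSubgroup.closure
        ((Submonoid.closure
          {z : ℂ | ∃ a ∈ (fun u : ℂ => u ^ 2) '' U, ∃ b ∈ (fun u : ℂ => u ^ 2) '' U,
            b ≠ 1 ∧ z = (1 - a) / (1 - b)} : Submonoid ℂ) : Set ℂ) : AddSubgroup ℂ) :=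
  stmt_12_general U hsub hone hmul hinv hcard
end

section
/- Let n ≥ 3 and let ζ_n = exp(2πi/n). Then every element of R(U_n) lies in the cyclotomic field ℚ(ζ_n), the subfield of ℂ generated over ℚ by ζ_n. -/
open ComplexConjugate

lemma sbr_eq_of_norm_eq_one {u : ℂ} (hu : ‖u‖ = 1) (p : ℂ) :
    sbr u p = (u ^ 2 * conj p - p) / u := by
  have hu0 : u ≠ 0 := norm_ne_zero_iff.mp (by rw [hu]; exact one_ne_zero)
  rw [sbr, ← Complex.inv_eq_conj hu]
  field_simp

lemma Iop_eq_of_norm_eq_one {u v : ℂ} (hu : ‖u‖ = 1) (hv : ‖v‖ = 1) (p q : ℂ) :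
    Iop u v p q =
      (v ^ 2 * (u ^ 2 * conj p - p) - u ^ 2 * (v ^ 2 * conj q - q)) / (u ^ 2 - v ^ 2) := by
  have hu0 : u ≠ 0 := norm_ne_zero_iff.mp (by rw [hu]; exact one_ne_zero)
  have hv0 : v ≠ 0 := norm_ne_zero_iff.mp (by rw [hv]; exact one_ne_zero)
  simp only [Iop, sbr_eq_of_norm_eq_one hu, sbr_eq_of_norm_eq_one hv, ← Complex.inv_eq_conj hu,
    ← Complex.inv_eq_conj hv]
  -- when `u² = v²` both sides are `0`, through division by zero
  by_cases h : u ^ 2 - v ^ 2 = 0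
  · have h' : v ^ 2 - u ^ 2 = 0 := by linear_combination -h
    field_simp
    simp [h, h']
  · have h' : v ^ 2 - u ^ 2 ≠ 0 := fun h' => h (by linear_combination -h')
    field_simp
    ring

theorem mem_of_origamiPts {U : Set ℂ} {F : Subfield ℂ} (hU : ∀ u ∈ U, ‖u‖ = 1 ∧ u ^ 2 ∈ F)
    (hF : ∀ x ∈ F, conj x ∈ F) {z : ℂ} (hz : origamiPts U z) : z ∈ F := by
  induction hz with
  | zero => exact zero_mem F
  | one => exact one_mem F
  | @inter u v hu hv _ _ p q _ _ hpF hqF =>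
    obtain ⟨hu1, hu2⟩ := hU u hu
    obtain ⟨hv1, hv2⟩ := hU v hv
    rw [Iop_eq_of_norm_eq_one hu1 hv1]
    have hp' := hF p hpF
    have hq' := hF q hqF
    exact div_mem (sub_mem (mul_mem hv2 (sub_mem (mul_mem hu2 hp') hpF))
      (mul_mem hu2 (sub_mem (mul_mem hv2 hq') hqF))) (sub_mem hu2 hv2)

lemma conj_mem_closure_singleton_of_norm_eq_one {ζ : ℂ} (hζ : ‖ζ‖ = 1) {x : ℂ}
    (hx : x ∈ Subfield.closure {ζ}) : conj x ∈ Subfield.closure {ζ} := by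
  have : Subfield.closure {ζ} ≤ (Subfield.closure {ζ}).comap (starRingEnd ℂ) := by
    rw [Subfield.closure_le, Set.singleton_subset_iff, SetLike.mem_coe, Subfield.mem_comap,
      ← Complex.inv_eq_conj hζ]
    exact inv_mem (Subfield.subset_closure rfl)
  exact this hx

lemma IsPrimitiveRoot.mem_subfieldClosure_of_pow_eq_one {K : Type*} [Field K] {ζ w : K} {n : ℕ}
    [NeZero n] (hζ : IsPrimitiveRoot ζ n) (hw : w ^ n = 1) : w ∈ Subfield.closure {ζ} := by
  obtain ⟨i, -, rfl⟩ := hζ.eq_pow_of_pow_eq_one hw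
  exact pow_mem (Subfield.subset_closure (Set.mem_singleton ζ)) i

/-- Every element of `R(U_n)` lies in the cyclotomic field `ℚ(ζ_n)`, the subfield of `ℂ`
generated (over its prime field `ℚ`) by `ζ_n = exp(2πi/n)`.  Here `U_n` is the group of
`2n`-th roots of unity in `ℂ`. -/
theorem stmt_13 (n : ℕ) (hn : 3 ≤ n) (z : ℂ)
    (hz : origamiPts {w : ℂ | w ^ (2 * n) = 1} z) :
    z ∈ Subfield.closure {Complex.exp (2 * Real.pi * Complex.I / n)} := by
  have hn0 : n ≠ 0 := by omega
  have : NeZero n := ⟨hn0⟩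
  have hζ : IsPrimitiveRoot (Complex.exp (2 * Real.pi * Complex.I / n)) n :=
    Complex.isPrimitiveRoot_exp n hn0
  have hU (u : ℂ) (hu : u ^ (2 * n) = 1) : ‖u‖ = 1 ∧ u ^ 2 ∈ Subfield.closure {_} :=
    ⟨Complex.norm_eq_one_of_pow_eq_one hu (by positivity),
      hζ.mem_subfieldClosure_of_pow_eq_one (by rw [← pow_mul, hu])⟩
  exact mem_of_origamiPts hU
    (fun _ => conj_mem_closure_singleton_of_norm_eq_one
      (Complex.norm_eq_one_of_pow_eq_one hζ.pow_eq_one hn0)) hz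
end

section
/- Let n ≥ 4 be a composite integer, let ζ = exp(2πi/n), and let p be a prime dividing n. Then there exist an element x ∈ ℤ[ζ] and a finite list of pairs of integers (a_1,b_1), …, (a_k,b_k), with no a_i or b_i divisible by n, such that x · ∏_{i=1}^{k} (1 − ζ^{a_i})/(1 − ζ^{b_i}) = 1/p. -/
/-!
With `ω = ζ ^ (n / p)` a primitive `p`-th root of unity, `∏_{j=1}^{p-1} (1 - ω ^ j) = p`, so
repeating these `p - 1` denominators `s + 1` times contributes `p ^ (s + 1)`. For the
numerators pick `m ∣ n` with `Φ_m(1) = p ^ s` and `(s + 1)(p - 1) ≤ φ(m)`: take `m = p²`,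
`s = 1` if `p² ∣ n`; otherwise `n` is not a prime power and `m = n`, `s = 0` works. For
`η = ζ ^ (n / m)`, each `1 - η ^ i` is a multiple of `1 - η` in `ℤ[η]`, so `(1 - η) ^ φ(m)`
divides `Φ_m(1) = ∏_μ (1 - μ)` there, and the cofactor is `x`.
-/

open Polynomial Finset

theorem Fin.prod_repeat {M : Type*} [CommMonoid M] {n : ℕ} (m : ℕ) (a : Fin n → M) :
    ∏ i, Fin.repeat m a i = (∏ i, a i) ^ m := by
  calc ∏ i, Fin.repeat m a i = ∏ x : Fin m × Fin n, a x.2 :=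
        finProdFinEquiv.symm.prod_comp fun x => a x.2
    _ = (∏ i, a i) ^ m := by simp [Fintype.prod_prod_type]

theorem IsPrimitiveRoot.one_sub_pow_totient_dvd_eval_one_cyclotomic {R : Type*} [CommRing R]
    [IsDomain R] {η : R} {m : ℕ} (hη : IsPrimitiveRoot η m) :
    (1 - η) ^ m.totient ∣ (cyclotomic m R).eval 1 := by
  rcases m.eq_zero_or_pos with rfl | hm
  · simp
  have : NeZero m := ⟨hm.ne'⟩
  rw [cyclotomic_eq_prod_X_sub_primitiveRoots hη, eval_prod, ← hη.card_primitiveRoots,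
    ← prod_const]
  refine prod_dvd_prod_of_dvd _ _ fun μ hμ => ?_
  obtain ⟨i, -, rfl⟩ := hη.eq_pow_of_pow_eq_one ((mem_primitiveRoots hm).mp hμ).pow_eq_one
  simpa using one_sub_dvd_one_sub_pow η i

theorem Nat.exists_eval_one_cyclotomic_eq_pow_of_not_prime (R : Type*) [CommRing R] {n p : ℕ}
    (hn : n ≠ 0) (hnp : ¬ n.Prime) (hp : p.Prime) (hpn : p ∣ n) :
    ∃ m s : ℕ, m ∣ n ∧ 1 < m ∧ (s + 1) * (p - 1) ≤ m.totient ∧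
      (cyclotomic m R).eval 1 = (p : R) ^ s := by
  have : Fact p.Prime := ⟨hp⟩
  by_cases hp2 : p ^ 2 ∣ n
  · refine ⟨p ^ 2, 1, hp2, Nat.one_lt_pow two_ne_zero hp.one_lt, ?_, ?_⟩
    · rw [Nat.totient_prime_pow hp two_pos]
      simpa using Nat.mul_le_mul_right (p - 1) hp.two_le
    · simp [eval_one_cyclotomic_prime_pow (R := R) 1]
  · refine ⟨n, 0, dvd_rfl, ?_, ?_, ?_⟩
    · exact lt_of_lt_of_le hp.one_lt (Nat.le_of_dvd (Nat.pos_of_ne_zero hn) hpn)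
    · rw [zero_add, one_mul, ← Nat.totient_prime hp]
      exact Nat.le_of_dvd (Nat.totient_pos.mpr (Nat.pos_of_ne_zero hn)) (Nat.totient_dvd_of_dvd hpn)
    rw [pow_zero]
    refine eval_one_cyclotomic_not_prime_pow fun {q} hq k hqk => ?_
    subst hqk
    obtain rfl := (Nat.prime_dvd_prime_iff_eq hp hq).mp (hp.dvd_of_dvd_pow hpn)
    rcases k with _ | _ | k
    · exact hp.one_lt.ne' (Nat.dvd_one.mp hpn)
    · exact hnp (by simpa using hp)
    · exact hp2 (pow_dvd_pow p (by omega))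

theorem Int.not_natCast_dvd_mul_div {n d j : ℕ} (hn : n ≠ 0) (hd : d ∣ n) (hj0 : 0 < j)
    (hjd : j < d) : ¬ (n : ℤ) ∣ ((j * (n / d) : ℕ) : ℤ) := by
  rw [Int.natCast_dvd_natCast]
  have hnd : 0 < n / d := Nat.div_pos (Nat.le_of_dvd (Nat.pos_of_ne_zero hn) hd) (by omega)
  refine Nat.not_dvd_of_pos_of_lt (Nat.mul_pos hj0 hnd) ?_
  calc j * (n / d) < d * (n / d) := Nat.mul_lt_mul_of_pos_right hjd hnd
    _ = n := Nat.mul_div_cancel' hd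

theorem IsPrimitiveRoot.exists_mem_closure_mul_one_sub_pow_eq_eval_one_cyclotomic {R : Type*}
    [CommRing R] [IsDomain R] {η : R} {m k : ℕ} (hη : IsPrimitiveRoot η m)
    (hk : k ≤ m.totient) :
    ∃ x ∈ Subring.closure {η}, x * (1 - η) ^ k = (cyclotomic m R).eval 1 := by
  set S := Subring.closure {η}
  let η' : S := ⟨η, Subring.subset_closure rfl⟩
  have hη' : IsPrimitiveRoot η' m := IsPrimitiveRoot.coe_submonoidClass_iff.mp hη
  obtain ⟨y, hy⟩ := hη'.one_sub_pow_totient_dvd_eval_one_cyclotomic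
  refine ⟨(y * (1 - η') ^ (m.totient - k) : S), Subtype.prop _, ?_⟩
  rw [← map_cyclotomic m S.subtype, eval_one_map, hy, ← Nat.sub_add_cancel hk]
  simp only [map_mul, map_pow, Subring.subtype_apply, Nat.add_sub_cancel]
  push_cast
  ring

theorem IsPrimitiveRoot.prod_fin_one_sub_pow_eq_order {R : Type*} [CommRing R] [IsDomain R]
    {ω : R} {p : ℕ} (hω : IsPrimitiveRoot ω p) (hp : p ≠ 0) :
    ∏ j : Fin (p - 1), (1 - ω ^ ((j : ℕ) + 1)) = p := by
  obtain ⟨q, rfl⟩ := Nat.exists_eq_succ_of_ne_zero hp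
  rw [Fin.prod_univ_eq_prod_range (fun j => 1 - ω ^ (j + 1)), Nat.succ_sub_one,
    hω.prod_one_sub_pow_eq_order, Nat.cast_succ]

theorem IsPrimitiveRoot.exists_mem_closure_mul_prod_div_eq_one_div {K : Type*} [Field K] {ζ : K}
    {n p : ℕ} (hζ : IsPrimitiveRoot ζ n) (hn : n ≠ 0) (hnp : ¬ n.Prime) (hp : p.Prime)
    (hpn : p ∣ n) :
    ∃ x ∈ Subring.closure {ζ}, ∃ (k : ℕ) (a b : Fin k → ℤ),
      (∀ i, ¬ (n : ℤ) ∣ a i) ∧ (∀ i, ¬ (n : ℤ) ∣ b i) ∧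
      x * ∏ i, (1 - ζ ^ a i) / (1 - ζ ^ b i) = 1 / (p : K) := by
  obtain ⟨m, s, hmn, hm1, hms, hΦ⟩ :=
    Nat.exists_eval_one_cyclotomic_eq_pow_of_not_prime K hn hnp hp hpn
  have hη : IsPrimitiveRoot (ζ ^ (n / m)) m :=
    hζ.pow (Nat.pos_of_ne_zero hn) (Nat.div_mul_cancel hmn).symm
  obtain ⟨x, hxη, hx⟩ := hη.exists_mem_closure_mul_one_sub_pow_eq_eval_one_cyclotomic hms
  have hxζ : x ∈ Subring.closure {ζ} :=
    Subring.closure_le.mpr (Set.singleton_subset_iff.mpr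
      (pow_mem (Subring.subset_closure (Set.mem_singleton ζ)) _)) hxη
  have hω : IsPrimitiveRoot (ζ ^ (n / p)) p :=
    hζ.pow (Nat.pos_of_ne_zero hn) (Nat.div_mul_cancel hpn).symm
  have : NeZero p := ⟨hp.ne_zero⟩
  have hp0 : (p : K) ≠ 0 := hω.neZero'.out
  let b : Fin (p - 1) → ℤ := fun j => (((j : ℕ) + 1) * (n / p) : ℕ)
  have hb : ∏ i, (1 - ζ ^ Fin.repeat (s + 1) b i) = (p : K) ^ (s + 1) := by
    rw [← hω.prod_fin_one_sub_pow_eq_order hp.ne_zero, ← Fin.prod_repeat]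
    simp only [Fin.repeat_apply, b, zpow_natCast, ← pow_mul, mul_comm]
  refine ⟨x, hxζ, (s + 1) * (p - 1), fun _ => ((n / m : ℕ) : ℤ), Fin.repeat (s + 1) b,
    fun _ => ?_, fun j => ?_, ?_⟩
  · simpa using Int.not_natCast_dvd_mul_div hn hmn one_pos hm1
  · exact Int.not_natCast_dvd_mul_div hn hpn j.modNat.succ_pos (by omega)
  · rw [prod_div_distrib, prod_const, card_univ, Fintype.card_fin, hb, mul_div_assoc',
      zpow_natCast, hx, hΦ, pow_succ, div_mul_eq_div_div, div_self (pow_ne_zero _ hp0)]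

/-- For `n ≥ 4` composite, `ζ = exp(2πi/n)`, and `p` a prime dividing `n`, there are
`x ∈ ℤ[ζ]` and a finite list of pairs of integers `(aᵢ, bᵢ)`, none divisible by `n`,
with `x · ∏ᵢ (1 − ζ^{aᵢ})/(1 − ζ^{bᵢ}) = 1/p`. -/
theorem stmt_16 (n : ℕ) (hn : 4 ≤ n) (hnp : ¬ n.Prime)
    (p : ℕ) (hp : p.Prime) (hpn : p ∣ n) :
    ∃ x ∈ Subring.closure {Complex.exp (2 * Real.pi * Complex.I / n)},
      ∃ (k : ℕ) (a b : Fin k → ℤ),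
        (∀ i, ¬ (n : ℤ) ∣ a i) ∧ (∀ i, ¬ (n : ℤ) ∣ b i) ∧
        x * ∏ i, (1 - Complex.exp (2 * Real.pi * Complex.I / n) ^ a i) /
            (1 - Complex.exp (2 * Real.pi * Complex.I / n) ^ b i)
          = 1 / (p : ℂ) :=
  (Complex.isPrimitiveRoot_exp n (by omega)).exists_mem_closure_mul_prod_div_eq_one_div
    (by omega) hnp hp hpn
end
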